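/- arXiv:1302.2274 — 2 statements merged into one kernel-verified Lean document; each statement's English description precedes it below -/
import Mathlib

section
/- For n ≥ 1, the number of 132-avoiding permutations of length n with no match of MMP(1,0,1,0) equals 2^{n-1}. -/
open Finset

/-- σ avoids the classical pattern 132. -/
def avoids132 {n : ℕ} (σ : Equiv.Perm (Fin n)) : Prop :=
  ¬ ∃ i j k : Fin n, i < j ∧ j < k ∧ σ i < σ k ∧ σ k < σ j

/-- position `i` matches the quadrant marked mesh pattern MMP(a,b,c,d) in σ. -/
def mmpMatch {n : ℕ} (a b c d : ℕ) (σ : Equiv.Perm (Fin n)) (i : Fin n) : Prop :=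
  a ≤ (Finset.univ.filter fun j => i < j ∧ σ i < σ j).card ∧
  b ≤ (Finset.univ.filter fun j => j < i ∧ σ i < σ j).card ∧
  c ≤ (Finset.univ.filter fun j => j < i ∧ σ j < σ i).card ∧
  d ≤ (Finset.univ.filter fun j => i < j ∧ σ j < σ i).card

/-- the number of positions of σ matching MMP(a,b,c,d). -/
noncomputable def mmp {n : ℕ} (a b c d : ℕ) (σ : Equiv.Perm (Fin n)) : ℕ :=
  Nat.card {i : Fin n // mmpMatch a b c d σ i}

/-!
Avoiding 132 and MMP(1,0,1,0) together says that every entry has at most one larger entry to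
its right: two such entries form a 132 if they decrease, and an MMP(1,0,1,0) match at the first
of them if they increase. As σ i has n - 1 - σ i larger entries in all (values 0-indexed), this
is the condition n - 1 - σ i ≤ i + 1, i.e. the complement τ = rev ∘ σ satisfies τ i ≤ i + 1.
Permutations with τ i ≤ i + k are counted by splitting off τ 0, which has min (k + 1) n
possible values; for k = 1 the product of these counts is 2 ^ (n - 1).
-/

open Equiv

section LargerAfter

variable {n : ℕ} (σ : Perm (Fin n))

def largerAfter (i : Fin n) : Finset (Fin n) := {j | i < j ∧ σ i < σ j}

variable {σ}

lemma mem_largerAfter {i j : Fin n} : j ∈ largerAfter σ i ↔ i < j ∧ σ i < σ j := by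
  simp [largerAfter]

lemma mmp_eq_zero_iff {a b c d : ℕ} : mmp a b c d σ = 0 ↔ ∀ i, ¬ mmpMatch a b c d σ i := by
  rw [mmp, Finite.card_eq_zero_iff, isEmpty_subtype]

lemma mmpMatch_one_zero_one_zero_iff {i : Fin n} :
    mmpMatch 1 0 1 0 σ i ↔ (∃ k, i < k ∧ σ i < σ k) ∧ ∃ j, j < i ∧ σ j < σ i := by
  simp [mmpMatch, one_le_card, filter_nonempty_iff]

lemma avoids132_and_mmp_eq_zero_iff :
    avoids132 σ ∧ mmp 1 0 1 0 σ = 0 ↔ ∀ i, #(largerAfter σ i) ≤ 1 := by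
  simp only [card_le_one, mem_largerAfter, mmp_eq_zero_iff, mmpMatch_one_zero_one_zero_iff,
    avoids132]
  constructor
  · rintro ⟨h132, hmmp⟩ i j ⟨hij, hσij⟩ k ⟨hik, hσik⟩
    by_contra hjk
    wlog hjk' : j < k generalizing j k
    · exact this k hik hσik j hij hσij (Ne.symm hjk) ((not_lt.1 hjk').lt_of_ne (Ne.symm hjk))
    rcases lt_or_gt_of_ne (σ.injective.ne hjk) with hσjk | hσjk
    · exact hmmp j ⟨⟨k, hjk', hσjk⟩, i, hij, hσij⟩
    · exact h132 ⟨i, j, k, hij, hjk', hσik, hσjk⟩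
  · intro h
    constructor
    · rintro ⟨i, j, k, hij, hjk, hik, hkj⟩
      exact hjk.ne (h i j ⟨hij, hik.trans hkj⟩ k ⟨hij.trans hjk, hik⟩)
    · rintro i ⟨⟨k, hik, hσik⟩, j, hji, hσji⟩
      exact hik.ne (h j i ⟨hji, hσji⟩ k ⟨hji.trans hik, hσji.trans hσik⟩)

lemma card_filter_apply_lt_apply (i : Fin n) : #{j | σ i < σ j} = (σ i).rev := by
  calc #{j | σ i < σ j} = #((Ioi (σ i)).map σ.symm.toEmbedding) := by
        congr 1
        ext j
        simp
    _ = (σ i).rev := by rw [card_map, Fin.card_Ioi, Fin.val_rev]; omega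

lemma rev_apply_le_of_card_largerAfter_le_one {i : Fin n} (h : #(largerAfter σ i) ≤ 1) :
    ((σ i).rev : ℕ) ≤ i + 1 := by
  have hsub : ({j | σ i < σ j} : Finset (Fin n)) ⊆ Iio i ∪ largerAfter σ i := by
    intro j hj
    simp only [mem_filter, mem_univ, true_and] at hj
    rcases lt_trichotomy j i with hji | rfl | hij
    · exact mem_union_left _ (mem_Iio.2 hji)
    · exact absurd hj (lt_irrefl _)
    · exact mem_union_right _ (mem_largerAfter.2 ⟨hij, hj⟩)
  calc ((σ i).rev : ℕ) = #{j | σ i < σ j} := (card_filter_apply_lt_apply i).symm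
    _ ≤ #(Iio i ∪ largerAfter σ i) := card_le_card hsub
    _ ≤ #(Iio i) + #(largerAfter σ i) := card_union_le _ _
    _ ≤ i + 1 := by rw [Fin.card_Iio]; omega

lemma card_largerAfter_le_one_of_rev_apply_le (h : ∀ i, ((σ i).rev : ℕ) ≤ i + 1) (i : Fin n) :
    #(largerAfter σ i) ≤ 1 := by
  induction i using WellFoundedLT.induction with
  | _ i ih =>
  by_cases hsmaller : ∃ p < i, σ p < σ i
  · obtain ⟨p, hpi, hσpi⟩ := hsmaller
    have hsub : insert i (largerAfter σ i) ⊆ largerAfter σ p := by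
      intro j hj
      rcases mem_insert.1 hj with rfl | hj
      · exact mem_largerAfter.2 ⟨hpi, hσpi⟩
      · obtain ⟨hij, hσij⟩ := mem_largerAfter.1 hj
        exact mem_largerAfter.2 ⟨hpi.trans hij, hσpi.trans hσij⟩
    have hcard := card_le_card hsub
    rw [card_insert_of_notMem (by simp [mem_largerAfter])] at hcard
    have := ih p hpi
    omega
  · -- all i earlier entries are larger, which leaves at most one larger entry for after i
    push Not at hsmaller
    have hsub : Iio i ∪ largerAfter σ i ⊆ ({j | σ i < σ j} : Finset (Fin n)) := by
      intro j hj
      simp only [mem_union, mem_Iio, mem_largerAfter] at hj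
      simp only [mem_filter, mem_univ, true_and]
      rcases hj with hji | ⟨_, hσij⟩
      · exact (hsmaller j hji).lt_of_ne (σ.injective.ne hji.ne')
      · exact hσij
    have hdisj : Disjoint (Iio i) (largerAfter σ i) :=
      disjoint_left.2 fun j hji hij => (mem_Iio.1 hji).not_gt (mem_largerAfter.1 hij).1
    have hcard := card_le_card hsub
    rw [card_union_of_disjoint hdisj, Fin.card_Iio, card_filter_apply_lt_apply] at hcard
    have := h i
    omega

lemma forall_card_largerAfter_le_one_iff :
    (∀ i, #(largerAfter σ i) ≤ 1) ↔ ∀ i, ((σ i).rev : ℕ) ≤ i + 1 :=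
  ⟨fun h _ => rev_apply_le_of_card_largerAfter_le_one (h _),
    card_largerAfter_le_one_of_rev_apply_le⟩

end LargerAfter

def ValueBoundedBy {n : ℕ} (k : ℕ) (σ : Perm (Fin n)) : Prop := ∀ i, (σ i : ℕ) ≤ i + k

lemma valueBoundedBy_decomposeFin_symm_iff {n k : ℕ} (p : Fin (n + 1)) (e : Perm (Fin n)) :
    ValueBoundedBy k (Perm.decomposeFin.symm (p, e)) ↔ (p : ℕ) ≤ k ∧ ValueBoundedBy k e := by
  have hval : ∀ j, (Perm.decomposeFin.symm (p, e) j.succ : ℕ) =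
      if (e j).succ = p then 0 else (e j : ℕ) + 1 := by
    intro j
    rw [Perm.decomposeFin_symm_apply_succ]
    split_ifs with hp
    · rw [hp, swap_apply_right, Fin.val_zero]
    · rw [swap_apply_of_ne_of_ne (Fin.succ_ne_zero _) hp, Fin.val_succ]
  refine ⟨fun h => ⟨by simpa using h 0, fun j => ?_⟩, fun ⟨hp, he⟩ i => ?_⟩
  · have hj := h j.succ
    rw [hval] at hj
    split_ifs at hj with hp
    · have h0 := h 0
      simp only [Perm.decomposeFin_symm_apply_zero, ← hp, Fin.val_succ, Fin.val_zero] at h0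
      omega
    · simp only [Fin.val_succ] at hj
      omega
  · induction i using Fin.cases with
    | zero => simpa using hp
    | succ j =>
      rw [hval]
      have := he j
      split_ifs <;> simp only [Fin.val_succ] <;> omega

lemma card_subtype_fin_val_le (n k : ℕ) :
    Nat.card {p : Fin (n + 1) // (p : ℕ) ≤ k} = min (k + 1) (n + 1) := by
  have hIic : ∀ p : Fin (n + 1), (p : ℕ) ≤ k ↔ p ∈ Iic (⟨min k n, by omega⟩ : Fin (n + 1)) := by
    intro p
    simp only [mem_Iic, Fin.le_iff_val_le_val]
    omega
  rw [Nat.card_congr (subtypeEquivRight hIic), Nat.card_eq_fintype_card, Fintype.card_coe,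
    Fin.card_Iic]
  dsimp only
  omega

lemma card_valueBoundedBy (n k : ℕ) :
    Nat.card {σ : Perm (Fin n) // ValueBoundedBy k σ} = ∏ m ∈ range n, min (k + 1) (m + 1) := by
  induction n with
  | zero =>
    exact Nat.card_eq_one_iff_exists.2 ⟨⟨1, fun i => i.elim0⟩, fun _ => Subsingleton.elim _ _⟩
  | succ n ih =>
    calc Nat.card {σ : Perm (Fin (n + 1)) // ValueBoundedBy k σ}
        = Nat.card {x : Fin (n + 1) × Perm (Fin n) // (x.1 : ℕ) ≤ k ∧ ValueBoundedBy k x.2} :=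
          Nat.card_congr (Perm.decomposeFin.symm.subtypeEquiv fun x =>
            (valueBoundedBy_decomposeFin_symm_iff x.1 x.2).symm).symm
      _ = Nat.card {p : Fin (n + 1) // (p : ℕ) ≤ k} *
            Nat.card {e : Perm (Fin n) // ValueBoundedBy k e} := by
          rw [Nat.card_congr (subtypeProdEquivProd (p := fun p : Fin (n + 1) => (p : ℕ) ≤ k)
            (q := ValueBoundedBy k)), Nat.card_prod]
      _ = ∏ m ∈ range (n + 1), min (k + 1) (m + 1) := by
          rw [card_subtype_fin_val_le, ih, prod_range_succ, mul_comm]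

lemma prod_range_min_two (n : ℕ) : ∏ m ∈ range n, min 2 (m + 1) = 2 ^ (n - 1) := by
  induction n with
  | zero => rfl
  | succ n ih =>
    rw [prod_range_succ, ih]
    rcases n with _ | n
    · rfl
    · rw [min_eq_left (by omega), ← pow_succ]
      rfl

lemma avoids132_and_mmp_eq_zero_iff_valueBoundedBy_rev {n : ℕ} (σ : Perm (Fin n)) :
    avoids132 σ ∧ mmp 1 0 1 0 σ = 0 ↔ ValueBoundedBy 1 (Fin.revPerm * σ) :=
  avoids132_and_mmp_eq_zero_iff.trans forall_card_largerAfter_le_one_iff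

theorem stmt6_general (n : ℕ) :
    Nat.card {σ : Equiv.Perm (Fin n) // avoids132 σ ∧ mmp 1 0 1 0 σ = 0} =
      2 ^ (n - 1) := by
  calc _ = Nat.card {τ : Perm (Fin n) // ValueBoundedBy 1 τ} :=
        Nat.card_congr ((Equiv.mulLeft Fin.revPerm).subtypeEquiv
          avoids132_and_mmp_eq_zero_iff_valueBoundedBy_rev)
    _ = 2 ^ (n - 1) := by rw [card_valueBoundedBy, prod_range_min_two]

theorem stmt6 (n : ℕ) (hn : 1 ≤ n) :
    Nat.card {σ : Equiv.Perm (Fin n) // avoids132 σ ∧ mmp 1 0 1 0 σ = 0} =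
      2 ^ (n - 1) :=
  stmt6_general n
end

section
/- For k ≥ 1 and n ≥ k+3, the number of 132-avoiding permutations of length n with exactly n-2-k matches of MMP(k,0,1,0) equals 2k + binom(n-k, 2). -/
open Finset

/-!
Position `i` fails to match MMP(k,0,1,0) exactly when it is a left-to-right minimum or fewer
than `k` larger entries follow it. Positions `0` and `n-k, …, n-1` always fail, so the count
`n-2-k` leaves room for exactly one further failure. This forces the only left-to-right minima to
be at `0` and at `σ⁻¹ 0`; since a 132-avoiding permutation is determined by its left-to-right
minima, `σ` is the block swap `m, …, m+d-1, 0, …, m-1, m+d, …, n-1` with `m = σ 0`,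
`d = σ⁻¹ 0`. The block swap has the right count exactly when `m + d ≤ n - k` (`(n-k).choose 2`
pairs) or `m = 1` or `d = 1` (`2k` further pairs).
-/

section

variable {n : ℕ}

def IsLRMin (σ : Equiv.Perm (Fin n)) (i : Fin n) : Prop :=
  ∀ j < i, σ i < σ j

instance (a b c d : ℕ) (σ : Equiv.Perm (Fin n)) : DecidablePred (mmpMatch a b c d σ) :=
  fun _ => inferInstanceAs (Decidable (_ ∧ _))

def smallerAfter (σ : Equiv.Perm (Fin n)) (i : Fin n) : Finset (Fin n) :=
  univ.filter fun j => i < j ∧ σ j < σ i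

@[simp]
lemma mem_smallerAfter {σ : Equiv.Perm (Fin n)} {i j : Fin n} :
    j ∈ smallerAfter σ i ↔ i < j ∧ σ j < σ i := by
  simp [smallerAfter]

lemma card_filter_val_eq_card_filter_Iio (P : ℕ → Prop) [DecidablePred P] :
    #(univ.filter fun i : Fin n => P i) = #((Iio n).filter P) := by
  rw [← Fin.map_valEmbedding_univ, filter_map, card_map]
  rfl

lemma mmp_eq_card_filter (a b c d : ℕ) (σ : Equiv.Perm (Fin n)) :
    mmp a b c d σ = #(univ.filter (mmpMatch a b c d σ)) := by
  rw [mmp, Nat.card_eq_fintype_card, Fintype.card_subtype]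

lemma not_isLRMin_iff {σ : Equiv.Perm (Fin n)} {i : Fin n} :
    ¬ IsLRMin σ i ↔ ∃ j < i, σ j < σ i := by
  simp only [IsLRMin, not_forall, not_lt, exists_prop]
  exact exists_congr fun j => and_congr_right fun hj => (σ.injective.ne hj.ne).le_iff_lt

lemma exists_isLRMin_le (σ : Equiv.Perm (Fin n)) (j : Fin n) :
    ∃ t ≤ j, IsLRMin σ t ∧ σ t ≤ σ j := by
  obtain ⟨t, ht, hmin⟩ := (Iic j).exists_min_image σ ⟨j, mem_Iic.2 le_rfl⟩
  refine ⟨t, mem_Iic.1 ht, fun s hs => ?_, hmin j (mem_Iic.2 le_rfl)⟩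
  exact (hmin s (mem_Iic.2 (hs.le.trans (mem_Iic.1 ht)))).lt_of_ne (σ.injective.ne hs.ne')

lemma card_filter_lt_add_card_smallerAfter (σ : Equiv.Perm (Fin n)) (i : Fin n) :
    #(univ.filter fun j => i < j ∧ σ i < σ j) + #(smallerAfter σ i) = n - 1 - i := by
  rw [← Fin.card_Ioi,
    ← card_filter_add_card_filter_not (s := Ioi i) (p := fun j => σ i < σ j)]
  congr 2 <;> ext j
  · simp
  · simp only [mem_filter, mem_Ioi, mem_smallerAfter, and_congr_right_iff]
    exact fun hj => by rw [not_lt, (σ.injective.ne hj.ne').le_iff_lt]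

lemma mmpMatch_iff (k : ℕ) (σ : Equiv.Perm (Fin n)) (i : Fin n) :
    mmpMatch k 0 1 0 σ i ↔ i + k + #(smallerAfter σ i) < n ∧ ¬ IsLRMin σ i := by
  have hsum := card_filter_lt_add_card_smallerAfter σ i
  have hi := i.isLt
  have hbefore : 1 ≤ #(univ.filter fun j => j < i ∧ σ j < σ i) ↔ ¬ IsLRMin σ i := by
    rw [Nat.one_le_iff_ne_zero, Ne, card_eq_zero, ← Ne, ← nonempty_iff_ne_empty,
      filter_nonempty_iff, not_isLRMin_iff]
    simp
  simp only [mmpMatch, zero_le, true_and, and_true, ← hbefore]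
  exact and_congr_left fun _ => ⟨fun _ => by omega, fun _ => by omega⟩

lemma not_mmpMatch_of_subset_smallerAfter {k : ℕ} {σ : Equiv.Perm (Fin n)} {i : Fin n}
    {s : Finset (Fin n)} (hs : s ⊆ smallerAfter σ i) (h : n ≤ i + k + #s) :
    ¬ mmpMatch k 0 1 0 σ i := by
  have := card_le_card hs
  rw [mmpMatch_iff]
  omega

lemma apply_le_of_not_isLRMin {σ τ : Equiv.Perm (Fin n)} (hτ : avoids132 τ) {i : Fin n}
    (hagree : ∀ j < i, σ j = τ j) (hi : ¬ IsLRMin σ i) : τ i ≤ σ i := by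
  obtain ⟨a, hai, ha⟩ := not_isLRMin_iff.1 hi
  by_contra! hlt
  set b := τ.symm (σ i)
  have hτb : τ b = σ i := τ.apply_symm_apply _
  have hib : i < b := by
    rcases lt_trichotomy b i with h | h | h
    · exact absurd (σ.injective ((hagree b h).trans hτb)) h.ne
    · exact absurd (h ▸ hτb) hlt.ne'
    · exact h
  exact hτ ⟨a, i, b, hai, hib, by rw [hτb, ← hagree a hai]; exact ha, hτb ▸ hlt⟩

lemma eq_of_avoids132_of_isLRMin {σ τ : Equiv.Perm (Fin n)} (hσ : avoids132 σ)
    (hτ : avoids132 τ) (hστ : ∀ i, IsLRMin σ i → τ i = σ i)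
    (hτσ : ∀ i, IsLRMin τ i → σ i = τ i) : σ = τ := by
  refine Equiv.ext fun i =>
    WellFoundedLT.induction (motive := fun i => σ i = τ i) i fun i ih => ?_
  by_cases hσi : IsLRMin σ i
  · exact (hστ i hσi).symm
  by_cases hτi : IsLRMin τ i
  · exact hτσ i hτi
  exact le_antisymm (apply_le_of_not_isLRMin hσ (fun j hj => (ih j hj).symm) hτi)
    (apply_le_of_not_isLRMin hτ ih hσi)

variable [NeZero n]

lemma isLRMin_zero (σ : Equiv.Perm (Fin n)) : IsLRMin σ 0 :=
  fun j hj => absurd hj (Fin.not_lt_zero j)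

lemma apply_pos_of_ne_symm_zero {σ : Equiv.Perm (Fin n)} {j : Fin n}
    (hj : j ≠ σ.symm 0) : 0 < σ j :=
  Fin.pos_iff_ne_zero.2 fun h => hj (σ.eq_symm_apply.2 h)

lemma isLRMin_symm_zero (σ : Equiv.Perm (Fin n)) : IsLRMin σ (σ.symm 0) := by
  intro j hj
  rw [σ.apply_symm_apply]
  exact apply_pos_of_ne_symm_zero hj.ne

lemma val_apply_zero_eq_zero_iff (σ : Equiv.Perm (Fin n)) :
    (σ 0 : ℕ) = 0 ↔ (σ.symm 0 : ℕ) = 0 := by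
  rw [Fin.val_eq_zero_iff, Fin.val_eq_zero_iff, ← Equiv.eq_symm_apply, eq_comm]

lemma eq_of_not_mmpMatch_of_mmp_eq {k : ℕ} {σ : Equiv.Perm (Fin n)}
    (hcnt : mmp k 0 1 0 σ = n - 2 - k) {i j : Fin n}
    (hi : ¬ mmpMatch k 0 1 0 σ i) (hi0 : 0 < i) (hik : i + k < n)
    (hj : ¬ mmpMatch k 0 1 0 σ j) (hj0 : 0 < j) (hjk : j + k < n) : i = j := by
  by_contra hij
  set A := univ.filter fun l : Fin n => 0 < l.val ∧ l.val + k < n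
  have hA : #A = n - k - 1 := by
    rw [card_filter_val_eq_card_filter_Iio (fun l => 0 < l ∧ l + k < n),
      show (Iio n).filter (fun l => 0 < l ∧ l + k < n) = Ioo 0 (n - k) by
        ext; simp only [mem_filter, mem_Iio, mem_Ioo]; omega]
    simp
  have hpair : {i, j} ⊆ A := by
    simp only [insert_subset_iff, singleton_subset_iff, mem_filter, mem_univ, true_and, A]
    exact ⟨⟨hi0, hik⟩, hj0, hjk⟩
  have hmatch : univ.filter (mmpMatch k 0 1 0 σ) ⊆ A \ {i, j} := by
    intro l hl
    simp only [mem_filter, mem_univ, true_and, mmpMatch_iff] at hl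
    have hl0 : l ≠ 0 := by rintro rfl; exact hl.2 (isLRMin_zero σ)
    simp only [mem_sdiff, mem_filter, mem_univ, true_and, mem_insert, mem_singleton, A]
    refine ⟨⟨Fin.pos_iff_ne_zero.2 hl0, by omega⟩, ?_⟩
    rintro (rfl | rfl) <;> simp_all [mmpMatch_iff]
  have h1 := card_le_card hpair
  have h2 := card_le_card hmatch
  rw [card_pair hij] at h1
  rw [card_sdiff_of_subset hpair, card_pair hij] at h2
  rw [mmp_eq_card_filter] at hcnt
  omega

lemma isLRMin_eq_zero_or_eq_symm_zero_of_mmp_eq {k : ℕ} (hn : k + 3 ≤ n)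
    {σ : Equiv.Perm (Fin n)} (hcnt : mmp k 0 1 0 σ = n - 2 - k) {t : Fin n}
    (ht : IsLRMin σ t) : t = 0 ∨ t = σ.symm 0 := by
  by_contra! h
  obtain ⟨ht0, htd⟩ := h
  set d := σ.symm 0
  have hσd : σ d = 0 := σ.apply_symm_apply 0
  have hnot : ∀ l, IsLRMin σ l → ¬ mmpMatch k 0 1 0 σ l := fun l hl h =>
    ((mmpMatch_iff k σ l).1 h).2 hl
  have htd_lt : t < d := by
    refine lt_of_le_of_ne (not_lt.1 fun hdt => ?_) htd
    exact absurd (ht d hdt) (by rw [hσd]; exact Fin.not_lt_zero _)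
  have ht_pos : 0 < t := Fin.pos_iff_ne_zero.2 ht0
  have hdk : n ≤ d + k := by
    by_contra! hdk
    exact htd (eq_of_not_mmpMatch_of_mmp_eq hcnt (hnot t ht) ht_pos (by omega)
      (hnot d (isLRMin_symm_zero σ)) (ht_pos.trans htd_lt) hdk)
  -- Now `d` and `t` lie right of `n-k-2`, so `n-k-1` and `n-k-2` both fail to match.
  set i₀ : Fin n := ⟨n - k - 1, by omega⟩
  set i₁ : Fin n := ⟨n - k - 2, by omega⟩
  have hi₀d : i₀ < d := by rw [Fin.lt_def]; simp only [i₀]; omega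
  have hi₀ : ¬ mmpMatch k 0 1 0 σ i₀ := by
    refine not_mmpMatch_of_subset_smallerAfter (s := {d}) ?_
      (by simp only [card_singleton, i₀]; omega)
    simpa [hσd] using ⟨hi₀d, apply_pos_of_ne_symm_zero hi₀d.ne⟩
  have hi₀t : i₀ ≤ t := by
    by_contra! hti₀
    refine hti₀.ne (eq_of_not_mmpMatch_of_mmp_eq hcnt (hnot t ht) ht_pos ?_ hi₀ ?_ ?_) <;>
      simp only [Fin.lt_def, i₀] at hti₀ ⊢ <;> omega
  have hi₁ : ¬ mmpMatch k 0 1 0 σ i₁ := by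
    have hi₁t : i₁ < t := lt_of_lt_of_le (by simp only [Fin.lt_def, i₀, i₁]; omega) hi₀t
    refine not_mmpMatch_of_subset_smallerAfter (s := {t, d}) ?_ ?_
    · simp only [insert_subset_iff, singleton_subset_iff, mem_smallerAfter, hσd]
      exact ⟨⟨hi₁t, ht i₁ hi₁t⟩, hi₁t.trans htd_lt,
        apply_pos_of_ne_symm_zero (hi₁t.trans htd_lt).ne⟩
    · rw [card_pair htd]; simp only [i₁]; omega
  have := eq_of_not_mmpMatch_of_mmp_eq hcnt hi₁
    (by simp only [Fin.lt_def, Fin.val_zero, i₁]; omega)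
    (by simp only [i₁]; omega) hi₀ (by simp only [Fin.lt_def, Fin.val_zero, i₀]; omega)
    (by simp only [i₀]; omega)
  simp only [Fin.ext_iff, i₀, i₁] at this
  omega

lemma val_apply_zero_add_val_symm_zero_le {σ : Equiv.Perm (Fin n)}
    (hmin : ∀ t, IsLRMin σ t → t = 0 ∨ t = σ.symm 0) : (σ 0 : ℕ) + σ.symm 0 ≤ n := by
  have hge : ∀ j < σ.symm 0, σ 0 ≤ σ j := by
    intro j hj
    obtain ⟨t, htj, ht, hle⟩ := exists_isLRMin_le σ j
    rcases hmin t ht with rfl | rfl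
    · exact hle
    · exact absurd (htj.trans_lt hj) (lt_irrefl _)
  have := card_le_card_of_injOn σ (s := Iio (σ.symm 0)) (t := Ici (σ 0))
    (fun j hj => by simpa using hge j (by simpa using hj)) σ.injective.injOn
  rw [Fin.card_Iio, Fin.card_Ici] at this
  have := (σ 0).isLt
  omega

end

def swapBlocksFun (m d i : ℕ) : ℕ :=
  if i < d then i + m else if i < d + m then i - d else i

/-- The permutation with one-line notation `m, m+1, …, m+d-1, 0, 1, …, m-1, m+d, …, n-1`. -/
noncomputable def swapBlocks (n m d : ℕ) (h : m + d ≤ n) : Equiv.Perm (Fin n) :=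
  Equiv.ofBijective
    (fun i => ⟨swapBlocksFun m d i, by
      have := i.isLt; unfold swapBlocksFun; split_ifs <;> omega⟩)
    (Finite.injective_iff_bijective.1 fun i j hij => by
      have := congrArg Fin.val hij
      simp only [swapBlocksFun] at this
      ext
      split_ifs at this <;> omega)

section

variable {n m d : ℕ} (h : m + d ≤ n)

lemma val_swapBlocks_apply (i : Fin n) :
    (swapBlocks n m d h i : ℕ) = swapBlocksFun m d i := rfl

lemma avoids132_swapBlocks : avoids132 (swapBlocks n m d h) := by
  rintro ⟨i, j, l, hij, hjl, h1, h2⟩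
  simp only [Fin.lt_def, val_swapBlocks_apply, swapBlocksFun] at hij hjl h1 h2
  split_ifs at h1 h2 <;> omega

lemma card_smallerAfter_swapBlocks (i : Fin n) :
    #(smallerAfter (swapBlocks n m d h) i) = if i.val < d then m else 0 := by
  refine (card_filter_val_eq_card_filter_Iio
    (fun j => i.val < j ∧ swapBlocksFun m d j < swapBlocksFun m d i)).trans ?_
  split_ifs with hi
  · rw [show (Iio n).filter (fun j => i.val < j ∧ swapBlocksFun m d j < swapBlocksFun m d i)
        = Ico d (d + m) by
      ext j; rw [mem_filter]; simp only [mem_Iio, mem_Ico, swapBlocksFun]; split_ifs <;> omega]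
    simp
  · rw [card_eq_zero, filter_eq_empty_iff]
    intro j hj
    simp only [mem_Iio, swapBlocksFun] at hj ⊢
    split_ifs <;> omega

variable {h}

lemma isLRMin_swapBlocks_iff (hmd : m = 0 ↔ d = 0) (i : Fin n) :
    IsLRMin (swapBlocks n m d h) i ↔ i.val = 0 ∨ i.val = d := by
  rw [← not_iff_not, not_isLRMin_iff]
  constructor
  · rintro ⟨j, hj, hlt⟩
    simp only [Fin.lt_def, val_swapBlocks_apply, swapBlocksFun] at hj hlt
    split_ifs at hlt <;> omega
  · intro hi
    have := i.isLt
    refine ⟨if i.val < d then ⟨0, by omega⟩ else ⟨d, by omega⟩, ?_, ?_⟩ <;>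
      split_ifs <;>
      simp only [Fin.lt_def, val_swapBlocks_apply, swapBlocksFun] <;> (try split_ifs) <;> omega

lemma mmp_swapBlocks (k : ℕ) (hmd : m = 0 ↔ d = 0) :
    mmp k 0 1 0 (swapBlocks n m d h) = (min d (n - k - m) - 1) + (n - k - (d + 1)) := by
  have hmatch : ∀ i : Fin n, mmpMatch k 0 1 0 (swapBlocks n m d h) i ↔
      (i.val ≠ 0 ∧ i.val ≠ d ∧ i.val + k + (if i.val < d then m else 0) < n) := fun i => by
    rw [mmpMatch_iff, card_smallerAfter_swapBlocks, isLRMin_swapBlocks_iff hmd]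
    tauto
  rw [mmp_eq_card_filter, filter_congr fun i _ => hmatch i,
    card_filter_val_eq_card_filter_Iio
      (fun x => x ≠ 0 ∧ x ≠ d ∧ x + k + (if x < d then m else 0) < n),
    show (Iio n).filter (fun x => x ≠ 0 ∧ x ≠ d ∧ x + k + (if x < d then m else 0) < n)
      = Ico 1 (min d (n - k - m)) ∪ Ico (d + 1) (n - k) by
        ext x; simp only [mem_filter, mem_Iio, mem_union, mem_Ico]; split_ifs <;> omega,
    card_union_of_disjoint
      (disjoint_left.2 fun x hx hx' => by simp only [mem_Ico] at hx hx'; omega)]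
  simp

variable [NeZero n]

lemma val_swapBlocks_zero (hmd : m = 0 ↔ d = 0) : (swapBlocks n m d h 0 : ℕ) = m := by
  rw [val_swapBlocks_apply, Fin.val_zero, swapBlocksFun]
  split_ifs <;> omega

lemma val_swapBlocks_symm_zero (hmd : m = 0 ↔ d = 0) :
    ((swapBlocks n m d h).symm 0 : ℕ) = d := by
  have hd : d < n := by have := NeZero.pos n; omega
  have hzero : (0 : Fin n) = swapBlocks n m d h ⟨d, hd⟩ := Fin.ext <| by
    simp only [val_swapBlocks_apply, swapBlocksFun, Fin.val_zero]
    split_ifs <;> omega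
  rw [(Equiv.symm_apply_eq _).2 hzero]

end

lemma eq_swapBlocks {n : ℕ} [NeZero n] {σ : Equiv.Perm (Fin n)} (hσ : avoids132 σ)
    (hmin : ∀ t, IsLRMin σ t → t = 0 ∨ t = σ.symm 0) :
    σ = swapBlocks n (σ 0) (σ.symm 0) (val_apply_zero_add_val_symm_zero_le hmin) := by
  have hmd := val_apply_zero_eq_zero_iff σ
  have hagree : ∀ t, t = 0 ∨ t = σ.symm 0 →
      σ t = swapBlocks n (σ 0) (σ.symm 0) (val_apply_zero_add_val_symm_zero_le hmin) t := by
    rintro t (rfl | rfl)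
    · exact Fin.ext (val_swapBlocks_zero hmd).symm
    · rw [σ.apply_symm_apply, eq_comm, ← Equiv.eq_symm_apply]
      exact Fin.ext (val_swapBlocks_symm_zero hmd).symm
  refine eq_of_avoids132_of_isLRMin hσ (avoids132_swapBlocks _)
    (fun t ht => (hagree t (hmin t ht)).symm) (fun t ht => hagree t ?_)
  rcases (isLRMin_swapBlocks_iff hmd t).1 ht with h0 | hd
  · exact Or.inl (Fin.ext h0)
  · exact Or.inr (Fin.ext hd)

lemma exists_eq_swapBlocks_of_mmp_eq {n k : ℕ} [NeZero n] (hn : k + 3 ≤ n)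
    {σ : Equiv.Perm (Fin n)} (hσ : avoids132 σ) (hcnt : mmp k 0 1 0 σ = n - 2 - k) :
    ∃ h, σ = swapBlocks n (σ 0) (σ.symm 0) h :=
  ⟨_, eq_swapBlocks hσ fun _ => isLRMin_eq_zero_or_eq_symm_zero_of_mmp_eq hn hcnt⟩

def admissiblePairs (n k : ℕ) : Finset (ℕ × ℕ) :=
  ((Ico 1 (n - k) ×ˢ Ico 1 (n - k)).filter fun p => p.1 + p.2 ≤ n - k) ∪
    (Ico (n - k) n ×ˢ {1}) ∪ ({1} ×ˢ Ico (n - k) n)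

lemma mem_admissiblePairs {n k : ℕ} (hk : k < n) {p : ℕ × ℕ} : p ∈ admissiblePairs n k ↔
    0 < p.1 ∧ 0 < p.2 ∧ p.1 + p.2 ≤ n ∧ (p.1 + p.2 ≤ n - k ∨ p.1 = 1 ∨ p.2 = 1) := by
  simp only [admissiblePairs, mem_union, mem_filter, mem_product, mem_Ico, mem_singleton]
  omega

lemma card_filter_add_le_eq_choose_two (N : ℕ) :
    #((Ico 1 N ×ˢ Ico 1 N).filter fun p => p.1 + p.2 ≤ N) = N.choose 2 := by
  conv_rhs => rw [← card_range N, ← card_product_filter_lt]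
  refine card_nbij' (fun p => (p.1 - 1, p.1 + p.2 - 1)) (fun q => (q.1 + 1, q.2 - q.1))
    ?_ ?_ ?_ ?_ <;>
    simp only [Set.MapsTo, Set.LeftInvOn, coe_filter, mem_product, mem_Ico, mem_range,
      Set.mem_ofPred_eq, Prod.forall, Prod.mk.injEq] <;> omega

lemma card_admissiblePairs {n k : ℕ} (hn : k + 2 ≤ n) :
    #(admissiblePairs n k) = 2 * k + (n - k).choose 2 := by
  rw [admissiblePairs, card_union_of_disjoint, card_union_of_disjoint,
    card_filter_add_le_eq_choose_two, card_product, card_product]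
  · simp only [Nat.card_Ico, card_singleton]
    omega
  all_goals
    refine disjoint_left.2 fun p hp hp' => ?_
    simp only [mem_union, mem_filter, mem_product, mem_Ico, mem_singleton] at hp hp'
    omega

lemma mmp_swapBlocks_eq_iff {n m d k : ℕ} (h : m + d ≤ n) (hn : k + 3 ≤ n)
    (hmd : m = 0 ↔ d = 0) :
    mmp k 0 1 0 (swapBlocks n m d h) = n - 2 - k ↔ (m, d) ∈ admissiblePairs n k := by
  rw [mmp_swapBlocks k hmd, mem_admissiblePairs (by omega)]
  omega

theorem stmt10_general (k n : ℕ) (hn : k + 3 ≤ n) :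
    Nat.card {σ : Equiv.Perm (Fin n) // avoids132 σ ∧ mmp k 0 1 0 σ = n - 2 - k} =
      2 * k + (n - k).choose 2 := by
  classical
  have : NeZero n := ⟨by omega⟩
  have hadm : ∀ p ∈ admissiblePairs n k, (p.1 = 0 ↔ p.2 = 0) ∧ p.1 + p.2 ≤ n :=
    fun p hp => by
      have := (mem_admissiblePairs (by omega)).1 hp
      omega
  rw [Nat.card_eq_fintype_card, Fintype.card_subtype, ← card_admissiblePairs (by omega)]
  refine (card_bij' (fun p hp => swapBlocks n p.1 p.2 (hadm p hp).2)
    (fun σ _ => ((σ 0 : ℕ), (σ.symm 0 : ℕ))) ?_ ?_ ?_ ?_).symm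
  · intro p hp
    exact mem_filter.2 ⟨mem_univ _, avoids132_swapBlocks _,
      (mmp_swapBlocks_eq_iff _ hn (hadm p hp).1).2 hp⟩
  · intro σ hσ
    obtain ⟨hav, hcnt⟩ := (mem_filter.1 hσ).2
    obtain ⟨_, heq⟩ := exists_eq_swapBlocks_of_mmp_eq hn hav hcnt
    rw [heq] at hcnt
    exact (mmp_swapBlocks_eq_iff _ hn (val_apply_zero_eq_zero_iff σ)).1 hcnt
  · intro p hp
    simp [val_swapBlocks_zero (hadm p hp).1, val_swapBlocks_symm_zero (hadm p hp).1]
  · intro σ hσ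
    obtain ⟨hav, hcnt⟩ := (mem_filter.1 hσ).2
    exact (exists_eq_swapBlocks_of_mmp_eq hn hav hcnt).2.symm

theorem stmt10 (k n : ℕ) (hk : 1 ≤ k) (hn : k + 3 ≤ n) :
    Nat.card {σ : Equiv.Perm (Fin n) // avoids132 σ ∧ mmp k 0 1 0 σ = n - 2 - k} =
      2 * k + (n - k).choose 2 :=
  stmt10_general k n hn
end
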